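/- arXiv:math/0409076 — 2 statements merged into one kernel-verified Lean document; each statement's English description precedes it below -/
import Mathlib

section
/- (Symmetry of the unperturbed invariant measure.) When k_+ = k_− = 0 (so M = N), the invariant measure is symmetric about N/2: g(ℓ) = g(N−ℓ), and hence π(ℓ) = π(N−ℓ), for every integer ℓ with 0 ≤ ℓ ≤ N. -/
open Finset

/-- Binomial coefficient `C(n,k)` for integers, with `C(n,k) = 0` if `k < 0` or `k > n`. -/
noncomputable def ch (n k : ℤ) : ℝ :=
  if 0 ≤ k ∧ k ≤ n then (n.toNat).choose k.toNat else 0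

/-- `c(i) = ⌈α·|i/N − 1/2|⌉`. -/
noncomputable def cc (N : ℕ) (α : ℝ) (i : ℤ) : ℤ :=
  ⌈α * |(i : ℝ) / (N : ℝ) - 1 / 2|⌉

/-- `f₊(i,j) = C(i−1,j)·C(N−i,2d−j)/C(N−1,2d)`. -/
noncomputable def fplus (N d : ℕ) (i j : ℤ) : ℝ :=
  ch (i - 1) j * ch ((N : ℤ) - i) (2 * (d : ℤ) - j) / ch ((N : ℤ) - 1) (2 * (d : ℤ))

/-- `f₋(i,j) = C(i,j)·C(N−i−1,2d−j)/C(N−1,2d)`. -/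
noncomputable def fminus (N d : ℕ) (i j : ℤ) : ℝ :=
  ch i j * ch ((N : ℤ) - i - 1) (2 * (d : ℤ) - j) / ch ((N : ℤ) - 1) (2 * (d : ℤ))

/-- `P₊₊(i)`: frozen-phase non-flip probability of a `+1` spin when `N⁺ = i`. -/
noncomputable def Ppp (N d : ℕ) (α : ℝ) (i : ℤ) : ℝ :=
  if (N : ℝ) * (1 / 2 - (d : ℝ) / α) ≤ (i : ℝ) ∧ (i : ℝ) ≤ (N : ℝ) * (1 / 2 + (d : ℝ) / α) then
    ∑ j ∈ Finset.Icc (max ((d : ℤ) + cc N α i) (i + 2 * (d : ℤ) - (N : ℤ)))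
        (min (2 * (d : ℤ)) i), fplus N d i j
  else 0

/-- `P₋₋(i)`: frozen-phase non-flip probability of a `−1` spin when `N⁺ = i`. -/
noncomputable def Pmm (N d : ℕ) (α : ℝ) (i : ℤ) : ℝ :=
  if (N : ℝ) * (1 / 2 - (d : ℝ) / α) ≤ (i : ℝ) ∧ (i : ℝ) ≤ (N : ℝ) * (1 / 2 + (d : ℝ) / α) then
    ∑ j ∈ Finset.Icc (max 0 (i + 2 * (d : ℤ) - (N : ℤ)))
        (min ((d : ℤ) - cc N α i) i), fminus N d i j
  else 0

/-- `g(ℓ) = C(M,ℓ)·Π_{j=0}^{ℓ−1} (1 − P₋₋(k₊+j))/(1 − P₊₊(k₊+j+1))`, with `g(0) = 1`. -/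
noncomputable def g (N d : ℕ) (α : ℝ) (kp M : ℕ) (ℓ : ℕ) : ℝ :=
  (M.choose ℓ : ℝ) * ∏ j ∈ Finset.range ℓ,
    (1 - Pmm N d α ((kp + j : ℕ) : ℤ)) / (1 - Ppp N d α ((kp + j + 1 : ℕ) : ℤ))

/-- `Z = Σ_{ℓ=1}^{M} g(ℓ)`. -/
noncomputable def Zc (N d : ℕ) (α : ℝ) (kp M : ℕ) : ℝ :=
  ∑ ℓ ∈ Finset.Icc 1 M, g N d α kp M ℓ

/-- The stationary probabilities `π(ℓ) = g(ℓ)/(1+Z)`. -/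
noncomputable def pii (N d : ℕ) (α : ℝ) (kp M : ℕ) (ℓ : ℕ) : ℝ :=
  g N d α kp M ℓ / (1 + Zc N d α kp M)

/-- `Q(ℓ,ℓ+1) = ((M−ℓ)/N)·(1 − P₋₋(k₊+ℓ))` (equal to `0` when `ℓ ≥ M`). -/
noncomputable def Qup (N d : ℕ) (α : ℝ) (kp M : ℕ) (ℓ : ℕ) : ℝ :=
  (((M : ℝ) - (ℓ : ℝ)) / (N : ℝ)) * (1 - Pmm N d α ((kp + ℓ : ℕ) : ℤ))

/-- `Q(ℓ,ℓ−1) = (ℓ/N)·(1 − P₊₊(k₊+ℓ))` (equal to `0` when `ℓ = 0`). -/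
noncomputable def Qdown (N d : ℕ) (α : ℝ) (kp M : ℕ) (ℓ : ℕ) : ℝ :=
  ((ℓ : ℝ) / (N : ℝ)) * (1 - Ppp N d α ((kp + ℓ : ℕ) : ℤ))

/-- The frozen-phase transition matrix `Q` on `{0,…,M}`. -/
noncomputable def Q (N d : ℕ) (α : ℝ) (kp M : ℕ) (ℓ m : ℕ) : ℝ :=
  if m = ℓ + 1 then Qup N d α kp M ℓ
  else if m + 1 = ℓ then Qdown N d α kp M ℓ
  else if m = ℓ then 1 - Qup N d α kp M ℓ - Qdown N d α kp M ℓ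
  else 0

/-! With `a(i) = 1 − P₊₊(i)` and `A(m) = a(1)⋯a(m)` (`flipProd`), the spin-flip reflection
`P₋₋(j) = P₊₊(N − j)` turns the product defining `g` into `a(N)⋯a(N−ℓ+1) / a(1)⋯a(ℓ) = A(N) / (A(ℓ)·A(N−ℓ))`, so
`g(ℓ) = C(N,ℓ)·A(N) / (A(ℓ)·A(N−ℓ))`, which is visibly invariant under `ℓ ↦ N − ℓ`. -/

theorem Finset.prod_range_succ_sub_mul_prod_range_reflect {M : Type*} [CommMonoid M]
    (f : ℕ → M) {n ℓ : ℕ} (hℓ : ℓ ≤ n) :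
    (∏ i ∈ range (n - ℓ), f (i + 1)) * ∏ j ∈ range ℓ, f (n - j) = ∏ i ∈ range n, f (i + 1) := by
  obtain ⟨m, rfl⟩ := Nat.exists_eq_add_of_le' hℓ
  rw [Nat.add_sub_cancel, prod_range_add, ← prod_range_reflect (fun j => f (m + j + 1))]
  congr 1
  refine prod_congr rfl fun j hj => ?_
  have := mem_range.mp hj
  congr 1
  omega

theorem cc_sub (N : ℕ) (α : ℝ) (i : ℤ) : cc N α ((N : ℤ) - i) = cc N α i := by
  unfold cc
  rcases eq_or_ne N 0 with rfl | hN
  · simp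
  · have : (((N : ℤ) - i : ℤ) : ℝ) / N - 1 / 2 = -((i : ℝ) / N - 1 / 2) := by
      push_cast
      field_simp
      ring
    rw [this, abs_neg]

theorem Pmm_eq_Ppp_sub (N d : ℕ) (α : ℝ) (i : ℤ) : Pmm N d α i = Ppp N d α ((N : ℤ) - i) := by
  unfold Pmm Ppp
  have hwindow : ((N : ℝ) * (1 / 2 - d / α) ≤ i ∧ (i : ℝ) ≤ N * (1 / 2 + d / α)) ↔
      ((N : ℝ) * (1 / 2 - d / α) ≤ (((N : ℤ) - i : ℤ) : ℝ) ∧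
        (((N : ℤ) - i : ℤ) : ℝ) ≤ N * (1 / 2 + d / α)) := by
    push_cast
    constructor <;> rintro ⟨h1, h2⟩ <;> constructor <;> linarith
  split_ifs with h h' h'
  · rw [cc_sub]
    -- Flipping every spin turns a `−1` spin with `j` neighbours `+1` into a `+1` spin with `2d − j`.
    refine sum_nbij' (fun j => 2 * (d : ℤ) - j) (fun j => 2 * (d : ℤ) - j) ?_ ?_ ?_ ?_ ?_
    · intro j hj
      simp only [Finset.mem_Icc] at hj ⊢
      omega
    · intro j hj
      simp only [Finset.mem_Icc] at hj ⊢
      omega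
    · intro j _; ring
    · intro j _; ring
    · intro j _
      unfold fminus fplus
      rw [sub_sub_cancel, sub_sub_cancel]
      ring
  · exact absurd (hwindow.mp h) h'
  · exact absurd (hwindow.mpr h') h
  · rfl

noncomputable def flipProd (N d : ℕ) (α : ℝ) (m : ℕ) : ℝ :=
  ∏ i ∈ range m, (1 - Ppp N d α ((i + 1 : ℕ) : ℤ))

theorem flipProd_ne_zero {N d : ℕ} {α : ℝ} (hPpp : ∀ i : ℕ, 1 ≤ i → i ≤ N → Ppp N d α (i : ℤ) < 1)
    {m : ℕ} (hm : m ≤ N) : flipProd N d α m ≠ 0 :=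
  prod_ne_zero_iff.mpr fun i hi =>
    (sub_pos.mpr (hPpp (i + 1) (by omega) (by have := mem_range.mp hi; omega))).ne'

theorem g_zero_eq_choose_mul_div {N d : ℕ} {α : ℝ}
    (hPpp : ∀ i : ℕ, 1 ≤ i → i ≤ N → Ppp N d α (i : ℤ) < 1) {ℓ : ℕ} (hℓ : ℓ ≤ N) :
    g N d α 0 N ℓ =
      N.choose ℓ * flipProd N d α N / (flipProd N d α ℓ * flipProd N d α (N - ℓ)) := by
  have hden : ∏ j ∈ range ℓ, (1 - Ppp N d α ((0 + j + 1 : ℕ) : ℤ)) = flipProd N d α ℓ := by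
    simp only [zero_add, flipProd]
  have hnum : ∏ j ∈ range ℓ, (1 - Pmm N d α ((0 + j : ℕ) : ℤ)) =
      flipProd N d α N / flipProd N d α (N - ℓ) := by
    rw [eq_div_iff (flipProd_ne_zero hPpp (N.sub_le ℓ)), flipProd, flipProd, mul_comm,
      ← prod_range_succ_sub_mul_prod_range_reflect (fun i => 1 - Ppp N d α (i : ℤ)) hℓ]
    refine congrArg _ (prod_congr rfl fun j hj => ?_)
    rw [Pmm_eq_Ppp_sub, zero_add, ← Nat.cast_sub (by have := mem_range.mp hj; omega)]
  rw [g, prod_div_distrib, hnum, hden]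
  ring

theorem stmt7_general (N d : ℕ) (α : ℝ)
    (hPpp : ∀ i : ℕ, 1 ≤ i → i ≤ N → Ppp N d α (i : ℤ) < 1) :
    ∀ ℓ : ℕ, ℓ ≤ N →
      g N d α 0 N ℓ = g N d α 0 N (N - ℓ) ∧
      pii N d α 0 N ℓ = pii N d α 0 N (N - ℓ) := by
  intro ℓ hℓ
  have hg : g N d α 0 N ℓ = g N d α 0 N (N - ℓ) := by
    rw [g_zero_eq_choose_mul_div hPpp hℓ, g_zero_eq_choose_mul_div hPpp (N.sub_le ℓ),
      Nat.choose_symm hℓ, Nat.sub_sub_self hℓ, mul_comm (flipProd N d α ℓ)]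
  exact ⟨hg, by rw [pii, pii, hg]⟩

/-- Symmetry of the unperturbed (`k₊ = k₋ = 0`, `M = N`) invariant measure about `N/2`:
`g(ℓ) = g(N−ℓ)` and `π(ℓ) = π(N−ℓ)` for `0 ≤ ℓ ≤ N`. -/
theorem stmt7 (N d : ℕ) (hd : 1 ≤ d) (hN : 2 * d < N) (α : ℝ) (hα : 0 < α)
    (hPpp : ∀ i : ℕ, 1 ≤ i → i ≤ N → Ppp N d α (i : ℤ) < 1) :
    ∀ ℓ : ℕ, ℓ ≤ N →
      g N d α 0 N ℓ = g N d α 0 N (N - ℓ) ∧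
      pii N d α 0 N ℓ = pii N d α 0 N (N - ℓ) :=
  stmt7_general N d α hPpp
end

section
/- (Mean number of +1 spins under the unperturbed invariant measure.) When k_+ = k_− = 0, the mean of the invariant measure is N/2: Σ_{ℓ=0}^{N} ℓ·π(ℓ) = N/2. -/
open Finset

/-! The non-flip probabilities are exchanged by the spin flip, `P₋₋(i) = P₊₊(N − i)`. With
`b k = 1 − P₊₊(k)`, the weights become `g(ℓ) = C(N,ℓ) ∏_{j<ℓ} b(N − j) / b(j + 1)`, which are
invariant under `ℓ ↦ N − ℓ`; a symmetric distribution on `{0, …, N}` has mean `N / 2`. -/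

lemma cc_natCast_sub (N : ℕ) (α : ℝ) (i : ℤ) : cc N α (N - i) = cc N α i := by
  unfold cc
  rcases eq_or_ne (N : ℝ) 0 with hN | hN
  · simp [hN]
  · have : ((N - i : ℤ) : ℝ) / N - 1 / 2 = -((i : ℝ) / N - 1 / 2) := by
      push_cast
      field_simp
      ring
    rw [this, abs_neg]

lemma fplus_natCast_sub (N d : ℕ) (i j : ℤ) :
    fplus N d (N - i) (2 * d - j) = fminus N d i j := by
  unfold fplus fminus
  rw [sub_sub_cancel, sub_sub_cancel, mul_comm (ch _ _)]

lemma Pmm_eq_Ppp_natCast_sub (N d : ℕ) (α : ℝ) (i : ℤ) :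
    Pmm N d α i = Ppp N d α (N - i) := by
  unfold Pmm Ppp
  have hwindow : ((N : ℝ) * (1 / 2 - d / α) ≤ ((N - i : ℤ) : ℝ) ∧
        ((N - i : ℤ) : ℝ) ≤ (N : ℝ) * (1 / 2 + d / α)) ↔
      ((N : ℝ) * (1 / 2 - d / α) ≤ i ∧ (i : ℝ) ≤ (N : ℝ) * (1 / 2 + d / α)) := by
    push_cast
    constructor <;> rintro ⟨h₁, h₂⟩ <;> constructor <;> linarith
  rw [if_congr hwindow.symm rfl rfl, cc_natCast_sub]
  congr 1
  refine Finset.sum_nbij' (fun j => 2 * d - j) (fun j => 2 * d - j) ?_ ?_ ?_ ?_ ?_ <;>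
    simp only [Finset.mem_Icc, max_le_iff, le_min_iff]
  · intro j hj; omega
  · intro j hj; omega
  · intro j _; ring
  · intro j _; ring
  · intro j _; exact (fplus_natCast_sub N d i j).symm

section BirthDeathWeight

variable {K : Type*} [Field K]

/-- Stationary weight of the birth–death chain on `{0, …, N}` with up-rate `(N − ℓ) b(N − ℓ)` and
down-rate `ℓ b(ℓ)`. -/
def birthDeathWeight (N : ℕ) (b : ℕ → K) (ℓ : ℕ) : K :=
  N.choose ℓ * ∏ j ∈ range ℓ, b (N - j) / b (j + 1)

lemma prod_range_sub_mul_prod_range_add_one {M : Type*} [CommMonoid M] (b : ℕ → M) {N ℓ : ℕ}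
    (h : ℓ ≤ N) :
    (∏ j ∈ range ℓ, b (N - j)) * ∏ j ∈ range (N - ℓ), b (j + 1) = ∏ j ∈ range N, b (j + 1) := by
  have hreflect : ∏ j ∈ range ℓ, b (N - j) = ∏ j ∈ range ℓ, b (N - ℓ + j + 1) := by
    rw [← Finset.prod_range_reflect]
    refine Finset.prod_congr rfl fun j hj => ?_
    rw [Finset.mem_range] at hj
    congr 1
    omega
  rw [hreflect, mul_comm, ← Finset.prod_range_add (fun j => b (j + 1)), Nat.sub_add_cancel h]

lemma birthDeathWeight_sub {N ℓ : ℕ} {b : ℕ → K} (hb : ∀ k, 1 ≤ k → k ≤ N → b k ≠ 0)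
    (h : ℓ ≤ N) : birthDeathWeight N b (N - ℓ) = birthDeathWeight N b ℓ := by
  have hB : ∀ m ≤ N, ∏ j ∈ range m, b (j + 1) ≠ 0 := fun m hm =>
    Finset.prod_ne_zero_iff.2 fun j hj => hb _ (by omega) (by simp at hj; omega)
  unfold birthDeathWeight
  rw [Nat.choose_symm h, Finset.prod_div_distrib, Finset.prod_div_distrib]
  congr 1
  rw [div_eq_div_iff (hB _ (Nat.sub_le N ℓ)) (hB _ h)]
  have hℓ := prod_range_sub_mul_prod_range_add_one b h
  have hNℓ := prod_range_sub_mul_prod_range_add_one b (Nat.sub_le N ℓ)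
  rw [Nat.sub_sub_self h] at hNℓ
  rw [hNℓ, ← hℓ]

lemma birthDeathWeight_pos [LinearOrder K] [IsStrictOrderedRing K] {N ℓ : ℕ} {b : ℕ → K}
    (hb : ∀ k, 1 ≤ k → k ≤ N → 0 < b k) (h : ℓ ≤ N) : 0 < birthDeathWeight N b ℓ := by
  unfold birthDeathWeight
  refine mul_pos (by exact_mod_cast Nat.choose_pos h) (Finset.prod_pos fun j hj => ?_)
  rw [Finset.mem_range] at hj
  exact div_pos (hb _ (by omega) (by omega)) (hb _ (by omega) (by omega))

end BirthDeathWeight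

lemma two_mul_sum_range_mul_eq_of_symm {R : Type*} [CommRing R] {N : ℕ} (w : ℕ → R)
    (hw : ∀ ℓ ≤ N, w (N - ℓ) = w ℓ) :
    2 * ∑ ℓ ∈ range (N + 1), (ℓ : R) * w ℓ = N * ∑ ℓ ∈ range (N + 1), w ℓ := by
  have hreflect : ∑ ℓ ∈ range (N + 1), (ℓ : R) * w ℓ
      = ∑ ℓ ∈ range (N + 1), ((N : R) - ℓ) * w ℓ := by
    rw [← Finset.sum_range_reflect]
    refine Finset.sum_congr rfl fun ℓ hℓ => ?_
    rw [Finset.mem_range] at hℓ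
    rw [Nat.add_sub_cancel, hw ℓ (by omega), Nat.cast_sub (by omega)]
  rw [two_mul, Finset.mul_sum]
  nth_rewrite 2 [hreflect]
  rw [← Finset.sum_add_distrib]
  exact Finset.sum_congr rfl fun ℓ _ => by ring

lemma g_zero_self_eq_birthDeathWeight (N d : ℕ) (α : ℝ) {ℓ : ℕ} (h : ℓ ≤ N) :
    g N d α 0 N ℓ = birthDeathWeight N (fun k : ℕ => 1 - Ppp N d α k) ℓ := by
  unfold g birthDeathWeight
  refine congrArg _ (Finset.prod_congr rfl fun j hj => ?_)
  rw [Finset.mem_range] at hj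
  rw [Pmm_eq_Ppp_natCast_sub, zero_add, ← Nat.cast_sub (by omega : j ≤ N)]

lemma one_add_Zc_eq_sum_g (N d : ℕ) (α : ℝ) (kp M : ℕ) :
    1 + Zc N d α kp M = ∑ ℓ ∈ range (M + 1), g N d α kp M ℓ := by
  rw [Finset.sum_range_succ', add_comm, Zc, ← Finset.Ico_add_one_right_eq_Icc,
    Finset.sum_Ico_eq_sum_range]
  simp [g, add_comm]

theorem stmt8_general (N d : ℕ) (α : ℝ)
    (hPpp : ∀ i : ℕ, 1 ≤ i → i ≤ N → Ppp N d α (i : ℤ) < 1) :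
    ∑ ℓ ∈ Finset.range (N + 1), (ℓ : ℝ) * pii N d α 0 N ℓ = (N : ℝ) / 2 := by
  set b : ℕ → ℝ := fun k => 1 - Ppp N d α k
  have hb : ∀ k, 1 ≤ k → k ≤ N → 0 < b k := fun k h₁ h₂ => sub_pos.2 (hPpp k h₁ h₂)
  have hg : ∀ ℓ ≤ N, g N d α 0 N ℓ = birthDeathWeight N b ℓ := fun ℓ h =>
    g_zero_self_eq_birthDeathWeight N d α h
  have hsymm : ∀ ℓ ≤ N, g N d α 0 N (N - ℓ) = g N d α 0 N ℓ := fun ℓ h => by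
    rw [hg ℓ h, hg _ (Nat.sub_le N ℓ), birthDeathWeight_sub (fun k h₁ h₂ => (hb k h₁ h₂).ne') h]
  have hZ : 0 < 1 + Zc N d α 0 N := by
    rw [one_add_Zc_eq_sum_g]
    refine Finset.sum_pos (fun ℓ hℓ => ?_) Finset.nonempty_range_add_one
    have hℓN : ℓ ≤ N := Nat.lt_succ_iff.1 (Finset.mem_range.1 hℓ)
    rw [hg ℓ hℓN]
    exact birthDeathWeight_pos hb hℓN
  have hmean := two_mul_sum_range_mul_eq_of_symm _ hsymm
  rw [← one_add_Zc_eq_sum_g] at hmean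
  simp only [pii, mul_div_assoc', ← Finset.sum_div]
  rw [div_eq_div_iff hZ.ne' two_ne_zero]
  linarith

/-- Mean number of `+1` spins under the unperturbed invariant measure:
`Σ_{ℓ=0}^{N} ℓ·π(ℓ) = N/2`. -/
theorem stmt8 (N d : ℕ) (hd : 1 ≤ d) (hN : 2 * d < N) (α : ℝ) (hα : 0 < α)
    (hPpp : ∀ i : ℕ, 1 ≤ i → i ≤ N → Ppp N d α (i : ℤ) < 1) :
    ∑ ℓ ∈ Finset.range (N + 1), (ℓ : ℝ) * pii N d α 0 N ℓ = (N : ℝ) / 2 :=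
  stmt8_general N d α hPpp
end
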